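/- arXiv:1802.04345 — 3 statements merged into one kernel-verified Lean document; each statement's English description precedes it below -/
import Mathlib

section
/- Let m ≥ 1 and let p : Fin (m+1) → ℝ^m be an affinely independent family of points. For any point x ∈ ℝ^m, if x does NOT lie in the convex hull of {p_0, …, p_m}, then the sum over j of the volumes of the sub-simplices obtained by replacing p_j with x is strictly greater than the volume of the simplex: ∑_{j=0}^{m} A(Function.update p j x) > A(p). -/
/-!
Write `x = ∑ᵢ λᵢ pᵢ` in barycentric coordinates. The affine map fixing every `pᵢ` with `i ≠ j`
and sending `pⱼ` to `x` is `y ↦ y + λⱼ(y) • (x - pⱼ)`, whose linear part is a transvection of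
determinant `1 + (λⱼ(x) - λⱼ(pⱼ)) = λⱼ(x)`. Hence the simplex with `pⱼ` replaced by `x` has volume
`|λⱼ(x)|` times that of the original one. Since `∑ λᵢ = 1` and `x` lies outside the simplex
exactly when some `λᵢ < 0`, we get `∑ |λᵢ| > 1`.
-/

open MeasureTheory

/-- The `m`-dimensional volume of the convex hull of the range of a family of points
in `ℝ^m` (the "area" `A(p)` of the simplex with vertices `p`). -/
noncomputable def simVol {m : ℕ} (p : Fin (m + 1) → EuclideanSpace ℝ (Fin m)) : ℝ :=
  (volume (convexHull ℝ (Set.range p))).toReal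

theorem Finset.sum_lt_sum_abs {ι R : Type*} [AddCommGroup R] [LinearOrder R]
    [IsOrderedCancelAddMonoid R] {s : Finset ι} {c : ι → R} {i : ι} (hi : i ∈ s) (hci : c i < 0) :
    ∑ j ∈ s, c j < ∑ j ∈ s, |c j| :=
  Finset.sum_lt_sum (fun j _ => le_abs_self (c j)) ⟨i, hi, hci.trans_le (abs_nonneg _)⟩

theorem AffineBasis.one_lt_sum_abs_coord {ι k V : Type*} [Fintype ι] [Field k] [LinearOrder k]
    [IsStrictOrderedRing k] [AddCommGroup V] [Module k V] (b : AffineBasis ι k V) {x : V}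
    (hx : x ∉ convexHull k (Set.range b)) :
    1 < ∑ i, |b.coord i x| := by
  rw [b.convexHull_eq_nonneg_coord, Set.mem_ofPred_eq, not_forall] at hx
  obtain ⟨i, hi⟩ := hx
  exact b.sum_coord_apply_eq_one x ▸ Finset.sum_lt_sum_abs (Finset.mem_univ i) (not_le.mp hi)

namespace AffineBasis

variable {ι k V : Type*} [CommRing k] [AddCommGroup V] [Module k V] (b : AffineBasis ι k V)

noncomputable def replaceVertex (j : ι) (x : V) : V →ᵃ[k] V where
  toFun y := y + b.coord j y • (x - b j)
  linear := LinearMap.transvection (b.coord j).linear (x - b j)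
  map_vadd' y v := by
    rw [AffineMap.map_vadd]
    simp only [LinearMap.transvection.apply, vadd_eq_add, add_smul]
    abel

theorem replaceVertex_apply (j : ι) (x y : V) :
    b.replaceVertex j x y = y + b.coord j y • (x - b j) :=
  rfl

theorem replaceVertex_comp_self [DecidableEq ι] (j : ι) (x : V) :
    b.replaceVertex j x ∘ b = Function.update b j x := by
  ext1 i
  rcases eq_or_ne i j with rfl | hij
  · simp [replaceVertex_apply]
  · simp [replaceVertex_apply, b.coord_apply_ne hij.symm, hij]

theorem det_replaceVertex_linear [Module.Free k V] [Module.Finite k V] (j : ι) (x : V) :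
    LinearMap.det (b.replaceVertex j x).linear = b.coord j x := by
  have := (b.coord j).linearMap_vsub x (b j)
  simp only [vsub_eq_sub, b.coord_apply_eq] at this
  rw [replaceVertex, LinearMap.transvection.det, this]
  ring

end AffineBasis

section AddHaar

variable {E : Type*} [NormedAddCommGroup E] [NormedSpace ℝ E] [MeasurableSpace E]
  (μ : Measure E) [μ.IsAddHaarMeasure]

theorem MeasureTheory.Measure.addHaar_image_affineMap [FiniteDimensional ℝ E] [BorelSpace E]
    (f : E →ᵃ[ℝ] E) (s : Set E) :
    μ (f '' s) = ENNReal.ofReal |LinearMap.det f.linear| * μ s := by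
  have hf : ⇑f = (f 0 +ᵥ ·) ∘ f.linear := by
    ext y
    simpa [add_comm] using f.map_vadd 0 y
  rw [hf, Set.image_comp, Set.image_vadd, measure_vadd, Measure.addHaar_image_linearMap]

namespace AffineBasis

variable {ι : Type*} (b : AffineBasis ι ℝ E)

theorem addHaar_convexHull_update [FiniteDimensional ℝ E] [BorelSpace E] [DecidableEq ι]
    (j : ι) (x : E) :
    μ (convexHull ℝ (Set.range (Function.update b j x)))
      = ENNReal.ofReal |b.coord j x| * μ (convexHull ℝ (Set.range b)) := by
  rw [← b.replaceVertex_comp_self, Set.range_comp, ← AffineMap.image_convexHull,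
    Measure.addHaar_image_affineMap, det_replaceVertex_linear]

theorem addHaar_convexHull_pos [Fintype ι] : 0 < μ (convexHull ℝ (Set.range b)) :=
  Measure.measure_pos_of_nonempty_interior μ ⟨_, b.centroid_mem_interior_convexHull⟩

theorem addHaar_convexHull_lt_top [Finite ι] : μ (convexHull ℝ (Set.range b)) < ⊤ :=
  ((Set.finite_range b).isCompact_convexHull ℝ).measure_lt_top

end AffineBasis

end AddHaar

theorem convexHull_exclusion_test_general {m : ℕ}
    (p : Fin (m + 1) → EuclideanSpace ℝ (Fin m)) (hp : AffineIndependent ℝ p)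
    (x : EuclideanSpace ℝ (Fin m)) (hx : x ∉ convexHull ℝ (Set.range p)) :
    ∑ j : Fin (m + 1), simVol (Function.update p j x) > simVol p := by
  obtain ⟨b, rfl⟩ : ∃ b : AffineBasis (Fin (m + 1)) ℝ (EuclideanSpace ℝ (Fin m)), ⇑b = p :=
    ⟨⟨p, hp, hp.affineSpan_eq_top_iff_card_eq_finrank_add_one.mpr (by simp)⟩, rfl⟩
  have hupdate (j : Fin (m + 1)) : simVol (Function.update b j x) = |b.coord j x| * simVol b := by
    rw [simVol, simVol, b.addHaar_convexHull_update volume, ENNReal.toReal_mul,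
      ENNReal.toReal_ofReal (abs_nonneg _)]
  have hpos : 0 < simVol b := ENNReal.toReal_pos (b.addHaar_convexHull_pos volume).ne'
    (b.addHaar_convexHull_lt_top volume).ne
  calc simVol b < (∑ j, |b.coord j x|) * simVol b := lt_mul_left hpos (b.one_lt_sum_abs_coord hx)
    _ = ∑ j, simVol (Function.update b j x) := by simp only [Finset.sum_mul, hupdate]

/-- Strict convex-hull inclusion test (Eq. (13)): if `x` does not lie in the convex
hull of the affinely independent family `p`, then the sum of the sub-simplex volumes
obtained by replacing each vertex with `x` strictly exceeds the simplex volume. -/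
theorem convexHull_exclusion_test {m : ℕ} (hm : 1 ≤ m)
    (p : Fin (m + 1) → EuclideanSpace ℝ (Fin m)) (hp : AffineIndependent ℝ p)
    (x : EuclideanSpace ℝ (Fin m)) (hx : x ∉ convexHull ℝ (Set.range p)) :
    ∑ j : Fin (m + 1), simVol (Function.update p j x) > simVol p :=
  convexHull_exclusion_test_general p hp x hx
end

section
/- Let P ∈ ℝ^{N×N} and B ∈ ℝ^{N×M} be entrywise nonnegative with ∑_j P_{ij} + ∑_m B_{im} = 1 for every i, and suppose for every index i there exist r ≥ 0 and indices i = j_0, …, j_r with P_{j_t, j_{t+1}} > 0 for t < r and ∑_m B_{j_r, m} > 0. Then (I − P) is invertible, and the powers of the block matrix Υ = fromBlocks I 0 B P converge: Υ^k → fromBlocks I 0 ((I − P)^{-1}·B) 0 as k → ∞. -/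
/-!
The row sums of `P ^ k` are nonincreasing in `k`, and the row of a state with a path to a state
with a positive exit weight `∑ m, B j m` eventually has row sum `< 1`. Hence some power `P ^ K`
has all row sums at most some `c < 1`, the entries of `P ^ k` are at most `c ^ (k / K)`, and
`P ^ k → 0`. A fixed vector of `P` is fixed by every `P ^ k`, so it vanishes and `1 - P` is
invertible. Finally `Υ ^ k = fromBlocks 1 0 ((∑ t < k, P ^ t) * B) (P ^ k)` and
`∑ t < k, P ^ t = (1 - P)⁻¹ * (1 - P ^ k) → (1 - P)⁻¹`.
-/

open Filter Topology Finset

theorem Finite.exists_le_lt_of_forall_lt {ι α : Type*} [Finite ι] [LinearOrder α]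
    {f : ι → α} {a b : α} (hb : b < a) (hf : ∀ i, f i < a) : ∃ c < a, b ≤ c ∧ ∀ i, f i ≤ c := by
  rcases isEmpty_or_nonempty ι with _ | _
  · exact ⟨b, hb, le_rfl, isEmptyElim⟩
  · obtain ⟨i₀, hi₀⟩ := Finite.exists_max f
    exact ⟨max b (f i₀), max_lt hb (hf i₀), le_max_left _ _,
      fun i => (hi₀ i).trans (le_max_right _ _)⟩

theorem tendsto_geom_sum_of_tendsto_pow_nhds_zero {R : Type*} [Ring R] [TopologicalSpace R]
    [IsTopologicalRing R] {x y : R} (hy : y * (1 - x) = 1)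
    (hx : Tendsto (x ^ ·) atTop (𝓝 0)) :
    Tendsto (fun k => ∑ t ∈ range k, x ^ t) atTop (𝓝 y) := by
  have hsum : ∀ k, ∑ t ∈ range k, x ^ t = y * (1 - x ^ k) := fun k => by
    rw [← mul_neg_geom_sum, ← mul_assoc, hy, one_mul]
  simpa [hsum] using ((tendsto_const_nhds (x := (1 : R))).sub hx).const_mul y

theorem Filter.Tendsto.matrix_fromBlocks {α l m n o R : Type*} [TopologicalSpace R]
    {f : Filter α} {A : α → Matrix n l R} {B : α → Matrix n m R} {C : α → Matrix o l R}
    {D : α → Matrix o m R} {a : Matrix n l R} {b : Matrix n m R} {c : Matrix o l R}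
    {d : Matrix o m R} (hA : Tendsto A f (𝓝 a)) (hB : Tendsto B f (𝓝 b))
    (hC : Tendsto C f (𝓝 c)) (hD : Tendsto D f (𝓝 d)) :
    Tendsto (fun x => Matrix.fromBlocks (A x) (B x) (C x) (D x)) f
      (𝓝 (Matrix.fromBlocks a b c d)) := by
  refine tendsto_pi_nhds.2 fun i => tendsto_pi_nhds.2 fun j => ?_
  rcases i with i | i <;> rcases j with j | j
  exacts [tendsto_pi_nhds.1 (tendsto_pi_nhds.1 hA i) j,
    tendsto_pi_nhds.1 (tendsto_pi_nhds.1 hB i) j, tendsto_pi_nhds.1 (tendsto_pi_nhds.1 hC i) j,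
    tendsto_pi_nhds.1 (tendsto_pi_nhds.1 hD i) j]

namespace Matrix

variable {n : Type*} [Fintype n]

section Order

variable {R : Type*} [Semiring R] [PartialOrder R] {A : Matrix n n R} {v w : n → R}

theorem mulVec_le_mulVec_of_nonneg [IsOrderedRing R] (hA : ∀ i j, 0 ≤ A i j) (hvw : v ≤ w) :
    A *ᵥ v ≤ A *ᵥ w := fun i =>
  dotProduct_le_dotProduct_of_nonneg_left hvw (hA i)

theorem mulVec_apply_lt_mulVec_apply_of_pos [IsStrictOrderedRing R] (hA : ∀ i j, 0 ≤ A i j)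
    (hvw : v ≤ w) {i j : n} (hij : 0 < A i j) (hj : v j < w j) :
    (A *ᵥ v) i < (A *ᵥ w) i :=
  sum_lt_sum (fun l _ => mul_le_mul_of_nonneg_left (hvw l) (hA i l))
    ⟨j, mem_univ j, mul_lt_mul_of_pos_left hj hij⟩

end Order

variable [DecidableEq n]

theorem isUnit_one_sub_of_tendsto_pow_nhds_zero {K : Type*} [Field K] [TopologicalSpace K]
    [IsTopologicalRing K] [T2Space K] {A : Matrix n n K}
    (h : Tendsto (A ^ ·) atTop (𝓝 0)) : IsUnit (1 - A) := by
  rw [isUnit_iff_isUnit_det, isUnit_iff_ne_zero, Ne, ← exists_mulVec_eq_zero_iff]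
  rintro ⟨v, hv0, hv⟩
  rw [sub_mulVec, one_mulVec, sub_eq_zero] at hv
  have hfix : ∀ k, A ^ k *ᵥ v = v := by
    intro k
    induction k with
    | zero => exact one_mulVec v
    | succ k ih => rw [pow_succ', ← mulVec_mulVec, ih, ← hv]
  have hlim : Tendsto (fun k => A ^ k *ᵥ v) atTop (𝓝 (0 *ᵥ v)) :=
    ((continuous_id.matrix_mulVec continuous_const).tendsto 0).comp h
  simp only [hfix, zero_mulVec, tendsto_const_nhds_iff] at hlim
  exact hv0 hlim

theorem fromBlocks_one_zero_pow {m R : Type*} [Fintype m] [DecidableEq m] [Semiring R]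
    (B : Matrix n m R) (P : Matrix n n R) (k : ℕ) :
    fromBlocks (1 : Matrix m m R) 0 B P ^ k =
      fromBlocks 1 0 ((∑ t ∈ range k, P ^ t) * B) (P ^ k) := by
  induction k with
  | zero => simp [← fromBlocks_one]
  | succ k ih =>
    rw [pow_succ, ih, fromBlocks_multiply, sum_range_succ, Matrix.add_mul]
    simp [pow_succ]

variable {P : Matrix n n ℝ}

theorem antitone_pow_mulVec_one (hP : ∀ i j, 0 ≤ P i j) (hsub : P *ᵥ 1 ≤ 1) :
    Antitone fun k => P ^ k *ᵥ 1 :=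
  antitone_nat_of_succ_le fun k => by
    simpa only [pow_succ, ← mulVec_mulVec] using
      mulVec_le_mulVec_of_nonneg (pow_apply_nonneg hP k) hsub

theorem pow_mulVec_one_le_one (hP : ∀ i j, 0 ≤ P i j) (hsub : P *ᵥ 1 ≤ 1) (k : ℕ) :
    P ^ k *ᵥ 1 ≤ 1 := by
  simpa using antitone_pow_mulVec_one hP hsub (Nat.zero_le k)

theorem pow_succ_mulVec_one_apply_lt_one (hP : ∀ i j, 0 ≤ P i j) (hsub : P *ᵥ 1 ≤ 1)
    {k : ℕ} {i j : n} (hij : 0 < P i j) (hj : (P ^ k *ᵥ 1) j < 1) :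
    (P ^ (k + 1) *ᵥ 1) i < 1 := by
  rw [pow_succ', ← mulVec_mulVec]
  exact (mulVec_apply_lt_mulVec_apply_of_pos hP (pow_mulVec_one_le_one hP hsub k) hij
    hj).trans_le (hsub i)

theorem pow_mulVec_one_apply_lt_one_of_path (hP : ∀ i j, 0 ≤ P i j) (hsub : P *ᵥ 1 ≤ 1)
    {k r : ℕ} {j : ℕ → n} (hpath : ∀ t < r, 0 < P (j t) (j (t + 1)))
    (hend : (P ^ k *ᵥ 1) (j r) < 1) : (P ^ (r + k) *ᵥ 1) (j 0) < 1 := by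
  induction r generalizing j with
  | zero => simpa using hend
  | succ r ih =>
    have htail := ih (j := fun t => j (t + 1)) (fun t ht => hpath (t + 1) (by omega)) hend
    rw [Nat.add_right_comm]
    exact pow_succ_mulVec_one_apply_lt_one hP hsub (hpath 0 r.succ_pos) htail

theorem exists_pow_mulVec_one_lt_one (hP : ∀ i j, 0 ≤ P i j) (hsub : P *ᵥ 1 ≤ 1)
    (h : ∀ i, ∃ k, (P ^ k *ᵥ 1) i < 1) : ∃ K, ∀ i, (P ^ K *ᵥ 1) i < 1 := by
  choose k hk using h
  exact ⟨univ.sup k, fun i =>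
    (antitone_pow_mulVec_one hP hsub (le_sup (mem_univ i)) i).trans_lt (hk i)⟩

theorem pow_mul_mulVec_one_le (hP : ∀ i j, 0 ≤ P i j) {K : ℕ} {c : ℝ} (hc : 0 ≤ c)
    (hK : P ^ K *ᵥ 1 ≤ fun _ => c) (m : ℕ) : P ^ (K * m) *ᵥ 1 ≤ fun _ => c ^ m := by
  induction m with
  | zero => intro i; simp
  | succ m ih =>
    calc P ^ (K * (m + 1)) *ᵥ 1 = P ^ (K * m) *ᵥ (P ^ K *ᵥ 1) := by
          rw [mulVec_mulVec, ← pow_add, Nat.mul_succ]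
      _ ≤ P ^ (K * m) *ᵥ (c • 1) := by
          refine mulVec_le_mulVec_of_nonneg (pow_apply_nonneg hP _) fun i => ?_
          simpa using hK i
      _ = c • (P ^ (K * m) *ᵥ 1) := mulVec_smul _ _ _
      _ ≤ fun _ => c ^ (m + 1) := fun i => by
          simpa [pow_succ'] using mul_le_mul_of_nonneg_left (ih i) hc

theorem tendsto_pow_nhds_zero_of_pow_mulVec_one_lt_one (hP : ∀ i j, 0 ≤ P i j)
    (hsub : P *ᵥ 1 ≤ 1) {K : ℕ} (hK : ∀ i, (P ^ K *ᵥ 1) i < 1) :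
    Tendsto (P ^ ·) atTop (𝓝 0) := by
  -- the period `K + 1` is nonzero and its row sums are still `< 1`
  obtain ⟨c, hc1, hc0, hc⟩ := Finite.exists_le_lt_of_forall_lt (zero_lt_one' ℝ)
    fun i => (antitone_pow_mulVec_one hP hsub K.le_succ i).trans_lt (hK i)
  have hentry : ∀ k i j, (P ^ k) i j ≤ c ^ (k / (K + 1)) := fun k i j =>
    calc (P ^ k) i j ≤ (P ^ k *ᵥ 1) i := by
          simpa [mulVec, dotProduct] using
            single_le_sum (fun l _ => pow_apply_nonneg hP k i l) (mem_univ j)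
      _ ≤ (P ^ ((K + 1) * (k / (K + 1))) *ᵥ 1) i :=
          antitone_pow_mulVec_one hP hsub (Nat.mul_div_le k (K + 1)) i
      _ ≤ c ^ (k / (K + 1)) := pow_mul_mulVec_one_le hP hc0 hc _ i
  have hgeom : Tendsto (fun k => c ^ (k / (K + 1))) atTop (𝓝 0) :=
    (tendsto_pow_atTop_nhds_zero_of_lt_one hc0 hc1).comp
      (Nat.tendsto_div_const_atTop K.succ_ne_zero)
  refine tendsto_pi_nhds.2 fun i => tendsto_pi_nhds.2 fun j => ?_
  exact squeeze_zero (fun k => pow_apply_nonneg hP k i j) (fun k => hentry k i j) hgeom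

end Matrix

open Matrix in
/-- Limit of the powers of the DILOC block matrix (Eq. (19)): under the absorbing
Markov chain condition, `I - P` is invertible and
`Υ^k → fromBlocks I 0 ((I - P)⁻¹ B) 0` as `k → ∞`. -/
theorem fromBlocks_pow_limit {N M : ℕ}
    (P : Matrix (Fin N) (Fin N) ℝ) (B : Matrix (Fin N) (Fin M) ℝ)
    (hP : ∀ i j, 0 ≤ P i j) (hB : ∀ i m', 0 ≤ B i m')
    (hrow : ∀ i, ∑ j, P i j + ∑ m', B i m' = 1)
    (hconn : ∀ i : Fin N, ∃ (r : ℕ) (jseq : ℕ → Fin N), jseq 0 = i ∧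
      (∀ t < r, 0 < P (jseq t) (jseq (t + 1))) ∧ 0 < ∑ m', B (jseq r) m') :
    IsUnit ((1 : Matrix (Fin N) (Fin N) ℝ) - P) ∧
      Tendsto (fun k => (Matrix.fromBlocks (1 : Matrix (Fin M) (Fin M) ℝ) 0 B P) ^ k)
        atTop (nhds (Matrix.fromBlocks 1 0 (((1 : Matrix (Fin N) (Fin N) ℝ) - P)⁻¹ * B) 0)) := by
  have hrowP : ∀ i, (P *ᵥ 1) i = 1 - ∑ m', B i m' := fun i => by
    rw [← hrow i, add_sub_cancel_right]
    simp [mulVec, dotProduct]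
  have hsub : P *ᵥ 1 ≤ 1 := fun i => by
    simpa [hrowP] using sum_nonneg fun m' _ => hB i m'
  have hleak : ∀ i, ∃ k, (P ^ k *ᵥ 1) i < 1 := fun i => by
    obtain ⟨r, j, rfl, hpath, hexit⟩ := hconn i
    exact ⟨r + 1,
      pow_mulVec_one_apply_lt_one_of_path hP hsub hpath (by simpa [hrowP] using hexit)⟩
  obtain ⟨K, hK⟩ := exists_pow_mulVec_one_lt_one hP hsub hleak
  have hlim := tendsto_pow_nhds_zero_of_pow_mulVec_one_lt_one hP hsub hK
  have hunit := isUnit_one_sub_of_tendsto_pow_nhds_zero hlim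
  refine ⟨hunit, ?_⟩
  have hsum := tendsto_geom_sum_of_tendsto_pow_nhds_zero
    (nonsing_inv_mul _ ((isUnit_iff_isUnit_det _).1 hunit)) hlim
  simp_rw [fromBlocks_one_zero_pow]
  exact tendsto_const_nhds.matrix_fromBlocks tendsto_const_nhds
    (((continuous_id.matrix_mul continuous_const).tendsto _).comp hsum) hlim
end

section
/- (Theorem 2, mobile localization convergence.) Let (P_k)_{k≥0} be N×N real matrices, each entrywise nonnegative with all row sums at most 1, and suppose there exist α ∈ (0,1) and a strictly increasing sequence of times k_0 < k_1 < ⋯ such that for every j, every row sum of P_{k_{j+1}−1} ⋯ P_{k_j} is at most 1 − α. Let (B_k), (U_k), (W_k) be arbitrary sequences of real matrices of compatible sizes, and suppose X_{k+1} = P_k X_k + B_k U_k + W_{k+1} and X*_{k+1} = P_k X*_k + B_k U_k + W_{k+1}. Then for every initial estimate X_0 ∈ ℝ^{N×m}, the error converges to zero: X_k − X*_k → 0 as k → ∞. -/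
/-!
The error `E k = X k - Xstar k` obeys `E (k + 1) = P k * E k`, hence `E b = windowProd P a b * E a`.
For the `ℓ∞`-operator norm (largest absolute row sum), a nonnegative matrix has norm equal to
its largest row sum, so `‖E k‖` is nonincreasing and shrinks by the factor `1 - α` across each
window `[kseq j, kseq (j + 1))`. Thus `‖E (kseq j)‖ ≤ (1 - α) ^ j * ‖E (kseq 0)‖`, and the
monotone sequence `‖E k‖` tends to `0` along with this subsequence.
-/

open Filter

/-- The backward product `P_{b-1} * P_{b-2} * ⋯ * P_a` of a sequence of matrices over
the window `[a, b)` (equal to `1` when `b ≤ a`). -/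
noncomputable def windowProd {N : ℕ} (P : ℕ → Matrix (Fin N) (Fin N) ℝ) (a b : ℕ) :
    Matrix (Fin N) (Fin N) ℝ :=
  ((List.range (b - a)).map fun t => P (b - 1 - t)).prod

theorem tendsto_zero_of_antitone_norm_of_contracts_along {E : Type*} [SeminormedAddCommGroup E]
    {e : ℕ → E} {r : ℝ} (hr0 : 0 ≤ r) (hr1 : r < 1) (hanti : Antitone fun k => ‖e k‖)
    {φ : ℕ → ℕ} (hφ : StrictMono φ) (hcontr : ∀ j, ‖e (φ (j + 1))‖ ≤ r * ‖e (φ j)‖) :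
    Tendsto e atTop (nhds 0) := by
  have hgeom : ∀ j, ‖e (φ j)‖ ≤ r ^ j * ‖e (φ 0)‖ := by
    intro j
    induction j with
    | zero => simp
    | succ j ih => calc
        ‖e (φ (j + 1))‖ ≤ r * ‖e (φ j)‖ := hcontr j
        _ ≤ r * (r ^ j * ‖e (φ 0)‖) := by gcongr
        _ = r ^ (j + 1) * ‖e (φ 0)‖ := by ring
  have hsub : Tendsto (fun j => ‖e (φ j)‖) atTop (nhds 0) :=
    squeeze_zero (fun _ => norm_nonneg _) hgeom
      (by simpa using (tendsto_pow_atTop_nhds_zero_of_lt_one hr0 hr1).mul_const ‖e (φ 0)‖)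
  have hinf := tendsto_atTop_ciInf hanti ⟨0, by rintro _ ⟨k, rfl⟩; exact norm_nonneg _⟩
  rw [tendsto_zero_iff_norm_tendsto_zero]
  rwa [tendsto_nhds_unique (hinf.comp hφ.tendsto_atTop) hsub] at hinf

section windowProd

variable {N : ℕ} (P : ℕ → Matrix (Fin N) (Fin N) ℝ)

@[simp]
theorem windowProd_self (a : ℕ) : windowProd P a a = 1 := by
  simp [windowProd]

theorem windowProd_succ {a b : ℕ} (hab : a ≤ b) :
    windowProd P a (b + 1) = P b * windowProd P a b := by
  unfold windowProd
  rw [Nat.succ_sub hab, List.range_succ_eq_map, List.map_cons, List.map_map, List.prod_cons]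
  congr 2
  refine List.map_congr_left fun t _ => ?_
  simp only [Function.comp_apply]
  congr 1
  omega

theorem windowProd_nonneg (hP : ∀ k i j, 0 ≤ P k i j) {a b : ℕ} (hab : a ≤ b) (i j : Fin N) :
    0 ≤ windowProd P a b i j := by
  induction b, hab using Nat.le_induction generalizing i j with
  | base => rw [windowProd_self, Matrix.one_apply]; positivity
  | succ b hab ih =>
    rw [windowProd_succ P hab, Matrix.mul_apply]
    exact Finset.sum_nonneg fun l _ => mul_nonneg (hP b i l) (ih l j)

theorem eq_windowProd_mul {m : ℕ} {e : ℕ → Matrix (Fin N) (Fin m) ℝ}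
    (he : ∀ k, e (k + 1) = P k * e k) {a b : ℕ} (hab : a ≤ b) :
    e b = windowProd P a b * e a := by
  induction b, hab using Nat.le_induction with
  | base => rw [windowProd_self, Matrix.one_mul]
  | succ b hab ih => rw [he b, ih, windowProd_succ P hab, Matrix.mul_assoc]

end windowProd

section LinftyOpNorm

attribute [local instance] Matrix.linftyOpNormedAddCommGroup

theorem Matrix.linfty_opNorm_le_of_nonneg {n l : Type*} [Fintype n] [Fintype l] {Q : Matrix n l ℝ} {c : ℝ}
    (hQ : ∀ i j, 0 ≤ Q i j) (hc : 0 ≤ c) (hrow : ∀ i, ∑ j, Q i j ≤ c) : ‖Q‖ ≤ c := by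
  lift c to NNReal using hc
  rw [Matrix.linfty_opNorm_def, NNReal.coe_le_coe]
  refine Finset.sup_le fun i _ => ?_
  rw [← NNReal.coe_le_coe, NNReal.coe_sum]
  simpa only [coe_nnnorm, Real.norm_of_nonneg (hQ i _)] using hrow i

variable {N : ℕ} (P : ℕ → Matrix (Fin N) (Fin N) ℝ)

theorem norm_windowProd_le_one (hP : ∀ k i j, 0 ≤ P k i j) (hrow : ∀ k i, ∑ j, P k i j ≤ 1)
    {a b : ℕ} (hab : a ≤ b) : ‖windowProd P a b‖ ≤ 1 := by
  induction b, hab using Nat.le_induction with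
  | base =>
    rw [windowProd_self]
    exact Matrix.linfty_opNorm_le_of_nonneg (fun i j => by rw [Matrix.one_apply]; positivity)
      zero_le_one (fun i => by simp [Matrix.one_apply])
  | succ b hab ih =>
    rw [windowProd_succ P hab]
    calc ‖P b * windowProd P a b‖ ≤ ‖P b‖ * ‖windowProd P a b‖ := Matrix.linfty_opNorm_mul _ _
      _ ≤ 1 * 1 := by
        gcongr
        exact Matrix.linfty_opNorm_le_of_nonneg (hP b) zero_le_one (hrow b)
      _ = 1 := one_mul 1

theorem tendsto_zero_of_substochastic_of_windows {m : ℕ} (hP : ∀ k i j, 0 ≤ P k i j)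
    (hrow : ∀ k i, ∑ j, P k i j ≤ 1) {α : ℝ} (hα0 : 0 < α) (hα1 : α < 1)
    {kseq : ℕ → ℕ} (hk : StrictMono kseq)
    (hwin : ∀ j i, ∑ l, windowProd P (kseq j) (kseq (j + 1)) i l ≤ 1 - α)
    {e : ℕ → Matrix (Fin N) (Fin m) ℝ} (he : ∀ k, e (k + 1) = P k * e k) :
    Tendsto e atTop (nhds 0) := by
  have hnorm_le {a b : ℕ} (hab : a ≤ b) {c : ℝ} (hW : ‖windowProd P a b‖ ≤ c) :
      ‖e b‖ ≤ c * ‖e a‖ := by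
    rw [eq_windowProd_mul P he hab]
    exact (Matrix.linfty_opNorm_mul _ _).trans (by gcongr)
  refine tendsto_zero_of_antitone_norm_of_contracts_along (r := 1 - α) (by linarith) (by linarith)
    (antitone_nat_of_succ_le fun k => ?_) hk fun j => ?_
  · simpa using hnorm_le k.le_succ (norm_windowProd_le_one P hP hrow k.le_succ)
  · have hle := (hk j.lt_add_one).le
    exact hnorm_le hle (Matrix.linfty_opNorm_le_of_nonneg (windowProd_nonneg P hP hle)
      (by linarith) (hwin j))

end LinftyOpNorm

/-- Theorem 2 (mobile localization convergence): if each `P_k` is nonnegative with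
row sums at most `1`, and along a strictly increasing sequence of times every window
product `P_{k_{j+1}-1} ⋯ P_{k_j}` has row sums at most `1 - α` for some `α ∈ (0,1)`
(each agent reaches an anchor in bounded time, infinitely often), then for the
estimates `X` and true locations `Xstar` evolving by the same barycentric update
`X_{k+1} = P_k X_k + B_k U_k + W_{k+1}`, the error `X_k - Xstar_k` converges to zero
from every initial estimate `X 0`. -/
theorem mobile_localization_converges {N M m : ℕ} (P : ℕ → Matrix (Fin N) (Fin N) ℝ)
    (hP : ∀ k i j, 0 ≤ P k i j) (hrow : ∀ k i, ∑ j, P k i j ≤ 1)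
    (α : ℝ) (hα0 : 0 < α) (hα1 : α < 1)
    (kseq : ℕ → ℕ) (hk : StrictMono kseq)
    (hwin : ∀ j i, ∑ l, windowProd P (kseq j) (kseq (j + 1)) i l ≤ 1 - α)
    (B : ℕ → Matrix (Fin N) (Fin M) ℝ) (U : ℕ → Matrix (Fin M) (Fin m) ℝ)
    (W : ℕ → Matrix (Fin N) (Fin m) ℝ)
    (X Xstar : ℕ → Matrix (Fin N) (Fin m) ℝ)
    (hX : ∀ k, X (k + 1) = P k * X k + B k * U k + W (k + 1))
    (hXstar : ∀ k, Xstar (k + 1) = P k * Xstar k + B k * U k + W (k + 1)) :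
    Tendsto (fun k => X k - Xstar k) atTop (nhds 0) := by
  refine tendsto_zero_of_substochastic_of_windows P hP hrow hα0 hα1 hk hwin fun k => ?_
  rw [hX, hXstar, Matrix.mul_sub]
  abel
end
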